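/- arXiv:1807.11018 — 5 statements merged into one kernel-verified Lean document; each statement's English description precedes it below -/
import Mathlib

section
/- Let d and k be integers with 1 ≤ k < d, and let t₁, …, t_{2k+2} ∈ ℤ^d be an O_k-configuration. Then ‖t_{i₁} − t_{i₂}‖₁ ≥ 2 for every pair of indices i₁ ≠ i₂. -/
/-- The `ℓ∞` distance between two points of `ℤ^d`, as a natural number. -/
def linfDist {d : ℕ} (x y : Fin d → ℤ) : ℕ :=
  Finset.univ.sup fun i => (x i - y i).natAbs

/-- The `ℓ1` distance between two points of `ℤ^d`, as a natural number. -/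
def l1Dist {d : ℕ} (x y : Fin d → ℤ) : ℕ :=
  ∑ i, (x i - y i).natAbs

/-- A family of `2k+2` distinct points of `ℤ^d` is an `O_k`-configuration if, in the graph on the
indices with an edge exactly when the `ℓ∞` distance is `1`, every index is adjacent to all others
except exactly one. -/
def IsOkConfig (d k : ℕ) (t : Fin (2 * k + 2) → Fin d → ℤ) : Prop :=
  Function.Injective t ∧
    ∀ i : Fin (2 * k + 2), ∃! i' : Fin (2 * k + 2), i' ≠ i ∧ linfDist (t i) (t i') ≠ 1

/-!
Suppose `x = t i₁` and `y = t i₂` are at `ℓ1` distance `1`: they differ by `±1` in a single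
coordinate `c`, so they are adjacent. Their non-neighbours `j₁` and `j₂` are then distinct and
adjacent, `j₁` is adjacent to `y` but not to `x`, and `j₂` to `x` but not to `y`. As `x` and `y`
agree off `c`, this puts `t j₁` two steps from `x` in coordinate `c`, on the side of `y`, and
`t j₂` two steps from `y` on the side of `x`; so `t j₁` and `t j₂` are three apart in coordinate
`c`, a contradiction.
-/

section Partner

variable {ι : Type*} {Adj : ι → ι → Prop} (hpartner : ∀ i, ∃! j, j ≠ i ∧ ¬Adj i j)
include hpartner

theorem adj_of_ne_of_not_adj {i j m : ι} (hji : j ≠ i) (hij : ¬Adj i j) (hmi : m ≠ i)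
    (hmj : m ≠ j) : Adj i m := by
  by_contra him
  exact hmj <| (hpartner i).unique ⟨hmi, him⟩ ⟨hji, hij⟩

theorem exists_partners_of_adj (hsymm : ∀ i j, Adj i j → Adj j i) {i₁ i₂ : ι}
    (hne : i₁ ≠ i₂) (hadj : Adj i₁ i₂) :
    ∃ j₁ j₂, (j₁ ≠ i₁ ∧ ¬Adj i₁ j₁) ∧ (j₂ ≠ i₂ ∧ ¬Adj i₂ j₂) ∧
      Adj i₂ j₁ ∧ Adj i₁ j₂ ∧ Adj j₁ j₂ := by
  obtain ⟨j₁, ⟨hj₁, hnadj₁⟩, -⟩ := hpartner i₁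
  obtain ⟨j₂, ⟨hj₂, hnadj₂⟩, -⟩ := hpartner i₂
  have hj₁i₂ : j₁ ≠ i₂ := by rintro rfl; exact hnadj₁ hadj
  have hj₂i₁ : j₂ ≠ i₁ := by rintro rfl; exact hnadj₂ (hsymm _ _ hadj)
  have hj₁j₂ : j₁ ≠ j₂ := by
    rintro rfl
    exact hne <| (hpartner j₁).unique ⟨hj₁.symm, fun h ↦ hnadj₁ (hsymm _ _ h)⟩
      ⟨hj₂.symm, fun h ↦ hnadj₂ (hsymm _ _ h)⟩
  refine ⟨j₁, j₂, ⟨hj₁, hnadj₁⟩, ⟨hj₂, hnadj₂⟩, ?_, ?_, ?_⟩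
  · exact adj_of_ne_of_not_adj hpartner hj₂ hnadj₂ hj₁i₂ hj₁j₂
  · exact adj_of_ne_of_not_adj hpartner hj₁ hnadj₁ hj₂i₁ hj₁j₂.symm
  · exact adj_of_ne_of_not_adj hpartner hj₁.symm (fun h ↦ hnadj₁ (hsymm _ _ h)) hj₁j₂.symm
      hj₂i₁

end Partner

section Distances

variable {d : ℕ}

theorem natAbs_sub_le_linfDist (x y : Fin d → ℤ) (i : Fin d) :
    (x i - y i).natAbs ≤ linfDist x y :=
  Finset.le_sup (f := fun i ↦ (x i - y i).natAbs) (Finset.mem_univ i)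

theorem linfDist_le_iff {x y : Fin d → ℤ} {n : ℕ} :
    linfDist x y ≤ n ↔ ∀ i, (x i - y i).natAbs ≤ n := by
  simp [linfDist, Finset.sup_le_iff]

theorem linfDist_comm (x y : Fin d → ℤ) : linfDist x y = linfDist y x := by
  simp only [linfDist, ← Int.natAbs_neg (x _ - y _), neg_sub]

theorem linfDist_ne_zero {x y : Fin d → ℤ} (h : x ≠ y) : linfDist x y ≠ 0 := by
  obtain ⟨i, hi⟩ := Function.ne_iff.mp h
  have := natAbs_sub_le_linfDist x y i
  omega

theorem natAbs_sub_le_l1Dist (x y : Fin d → ℤ) (i : Fin d) :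
    (x i - y i).natAbs ≤ l1Dist x y :=
  Finset.single_le_sum (f := fun i ↦ (x i - y i).natAbs) (fun _ _ ↦ Nat.zero_le _)
    (Finset.mem_univ i)

theorem linfDist_le_l1Dist (x y : Fin d → ℤ) : linfDist x y ≤ l1Dist x y :=
  linfDist_le_iff.mpr (natAbs_sub_le_l1Dist x y)

theorem eq_apply_of_l1Dist_le_one {x y : Fin d → ℤ} (h : l1Dist x y ≤ 1) {c a : Fin d}
    (hc : x c ≠ y c) (ha : a ≠ c) : x a = y a := by
  have hsum : (x a - y a).natAbs + (x c - y c).natAbs ≤ l1Dist x y :=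
    Finset.add_le_sum (f := fun i ↦ (x i - y i).natAbs) (fun _ _ ↦ Nat.zero_le _)
      (Finset.mem_univ a) (Finset.mem_univ c) ha
  omega

theorem linfDist_eq_one_of_l1Dist_le_one {x y : Fin d → ℤ} (h : l1Dist x y ≤ 1) (hne : x ≠ y) :
    linfDist x y = 1 := by
  have := linfDist_le_l1Dist x y
  have := linfDist_ne_zero hne
  omega

theorem two_le_natAbs_sub_of_forall_ne_eq {x y z : Fin d → ℤ} {c : Fin d}
    (hxy : ∀ a, a ≠ c → x a = y a) (hyz : linfDist y z = 1) (hxz : linfDist x z ≠ 1)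
    (hne : x ≠ z) : 2 ≤ (x c - z c).natAbs := by
  by_contra! hc
  have hle : linfDist x z ≤ 1 := linfDist_le_iff.mpr fun a ↦ by
    by_cases hac : a = c
    · subst hac; omega
    · rw [hxy a hac]; exact hyz ▸ natAbs_sub_le_linfDist y z a
  have := linfDist_ne_zero hne
  omega

end Distances

theorem okConfig_pairwise_l1_ge_two_general (d k : ℕ)
    (t : Fin (2 * k + 2) → Fin d → ℤ) (ht : IsOkConfig d k t) :
    ∀ i₁ i₂ : Fin (2 * k + 2), i₁ ≠ i₂ → 2 ≤ l1Dist (t i₁) (t i₂) := by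
  obtain ⟨hinj, hpartner⟩ := ht
  intro i₁ i₂ hne
  by_contra! hl1
  obtain ⟨c, hc⟩ := Function.ne_iff.mp (hinj.ne hne)
  have hagree (a) (ha : a ≠ c) : t i₁ a = t i₂ a := eq_apply_of_l1Dist_le_one (by omega) hc ha
  have hadj := linfDist_eq_one_of_l1Dist_le_one (by omega) (hinj.ne hne)
  obtain ⟨j₁, j₂, ⟨hj₁, hnadj₁⟩, ⟨hj₂, hnadj₂⟩, hadj₂₁, hadj₁₂, hadj_j⟩ :=
    exists_partners_of_adj (Adj := fun i j ↦ linfDist (t i) (t j) = 1) hpartner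
      (fun i j ↦ (linfDist_comm (t j) (t i)).trans) hne hadj
  have hfar₁ := two_le_natAbs_sub_of_forall_ne_eq hagree hadj₂₁ hnadj₁ (hinj.ne hj₁.symm)
  have hfar₂ := two_le_natAbs_sub_of_forall_ne_eq (fun a ha ↦ (hagree a ha).symm) hadj₁₂
    hnadj₂ (hinj.ne hj₂.symm)
  have := natAbs_sub_le_l1Dist (t i₁) (t i₂) c
  have := hadj₂₁ ▸ natAbs_sub_le_linfDist (t i₂) (t j₁) c
  have := hadj₁₂ ▸ natAbs_sub_le_linfDist (t i₁) (t j₂) c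
  have := hadj_j ▸ natAbs_sub_le_linfDist (t j₁) (t j₂) c
  omega

/-- For `1 ≤ k < d`, the points of an `O_k`-configuration in `ℤ^d` have pairwise
`ℓ1` distances at least `2`. -/
theorem okConfig_pairwise_l1_ge_two (d k : ℕ) (hk : 1 ≤ k) (hkd : k < d)
    (t : Fin (2 * k + 2) → Fin d → ℤ) (ht : IsOkConfig d k t) :
    ∀ i₁ i₂ : Fin (2 * k + 2), i₁ ≠ i₂ → 2 ≤ l1Dist (t i₁) (t i₂) :=
  okConfig_pairwise_l1_ge_two_general d k t ht
end

section
/- Let m₁, m₂ ≥ 1 and let ρ, μ ∈ [0,1) satisfy 1+(m₁−1)ρ − m₁μ > 0 and 1+(m₂−1)ρ − m₂μ > 0. Then the matrix W_{m₁,m₂}(ρ,μ) is positive definite. -/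
/-! Write `J` for an all-ones matrix. Up to the identification `Fin (m₁ + m₂) ≃ Fin m₁ ⊕ Fin m₂`,
`W_{m₁,m₂}(ρ,μ) = diag(A₁, A₂) + μJ` with `A_k = (1 - ρ)I + (ρ - μ)J` of size `m_k`. The summand
`μJ` is positive semidefinite as `μ ≥ 0`. The quadratic form of `A_k` is
`(1 - ρ)‖x‖² + (ρ - μ)(∑ xᵢ)²`, and Cauchy–Schwarz `(∑ xᵢ)² ≤ m_k‖x‖²` bounds it below by
`min(1 - ρ, 1 + (m_k - 1)ρ - m_kμ)‖x‖²`, so each `A_k` is positive definite. -/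

open Matrix

/-- The block matrix `W_{m₁,m₂}(ρ,μ)`: diagonal entries `1`, off-diagonal entries `ρ` within each
of the two diagonal blocks (of sizes `m₁` and `m₂`) and `μ` in the off-diagonal blocks. -/
def Wblk (m₁ m₂ : ℕ) (ρ μ : ℝ) : Matrix (Fin (m₁ + m₂)) (Fin (m₁ + m₂)) ℝ :=
  Matrix.of fun i j =>
    if i = j then 1 else if ((i : ℕ) < m₁ ↔ (j : ℕ) < m₁) then ρ else μ

namespace Matrix

variable {m n R : Type*}

def allOnes (n R : Type*) [One R] : Matrix n n R := of fun _ _ => 1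

theorem isHermitian_allOnes [Semiring R] [StarRing R] : (allOnes n R).IsHermitian := by
  ext; simp [allOnes]

variable [Fintype m] [Fintype n]

theorem PosDef.fromBlocks_zero [Ring R] [PartialOrder R] [StarRing R] [AddLeftMono R]
    {A : Matrix m m R} {D : Matrix n n R} (hA : A.PosDef) (hD : D.PosDef) :
    (fromBlocks A 0 0 D).PosDef := by
  refine .of_dotProduct_mulVec_pos
    (hA.isHermitian.fromBlocks conjTranspose_zero hD.isHermitian) fun x hx => ?_
  have hsplit : star x ⬝ᵥ (fromBlocks A 0 0 D *ᵥ x) =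
      star (x ∘ Sum.inl) ⬝ᵥ (A *ᵥ (x ∘ Sum.inl)) + star (x ∘ Sum.inr) ⬝ᵥ (D *ᵥ (x ∘ Sum.inr)) := by
    simp [dotProduct, fromBlocks_mulVec, Fintype.sum_sum_type]
  rw [hsplit]
  by_cases hl : x ∘ Sum.inl = 0
  · have hr : x ∘ Sum.inr ≠ 0 := fun hr => hx <| funext fun i => i.rec (congrFun hl) (congrFun hr)
    simpa [hl] using hD.dotProduct_mulVec_pos hr
  · exact add_pos_of_pos_of_nonneg (hA.dotProduct_mulVec_pos hl)
      (hD.posSemidef.dotProduct_mulVec_nonneg _)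

theorem posSemidef_allOnes [CommRing R] [PartialOrder R] [StarRing R] [StarOrderedRing R] :
    (allOnes n R).PosSemidef := by
  simpa [vecMulVec, allOnes] using posSemidef_vecMulVec_self_star (1 : n → R)

variable [DecidableEq n]

theorem dotProduct_smul_one_add_smul_allOnes_mulVec [CommRing R] (a b : R) (x : n → R) :
    x ⬝ᵥ ((a • 1 + b • allOnes n R) *ᵥ x) = a * ∑ i, x i ^ 2 + b * (∑ i, x i) ^ 2 := by
  simp only [add_mulVec, smul_mulVec, one_mulVec, dotProduct_add, dotProduct_smul]
  simp [allOnes, dotProduct, mulVec, sq, Finset.mul_sum, Finset.sum_mul]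
  exact Finset.sum_comm

theorem posDef_smul_one_add_smul_allOnes [Field R] [LinearOrder R] [IsStrictOrderedRing R]
    [StarRing R] [TrivialStar R] {a b : R} (ha : 0 < a) (hab : 0 < a + Fintype.card n * b) :
    (a • 1 + b • allOnes n R).PosDef := by
  refine .of_dotProduct_mulVec_pos ?_ fun x hx => ?_
  · exact (isHermitian_one.smul (.all a)).add (isHermitian_allOnes.smul (.all b))
  rw [star_trivial, dotProduct_smul_one_add_smul_allOnes_mulVec]
  have hQ : 0 < ∑ i, x i ^ 2 := by
    obtain ⟨i, hi⟩ := Function.ne_iff.1 hx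
    exact Finset.sum_pos' (fun i _ => sq_nonneg _) ⟨i, Finset.mem_univ i, pow_two_pos_of_ne_zero hi⟩
  have hCS : (∑ i, x i) ^ 2 ≤ Fintype.card n * ∑ i, x i ^ 2 := by
    simpa using sq_sum_le_card_mul_sum_sq (s := Finset.univ) (f := x)
  rcases le_or_gt 0 b with hb | hb
  · nlinarith [mul_nonneg hb (sq_nonneg (∑ i, x i))]
  · nlinarith [mul_le_mul_of_nonpos_left hCS hb.le]

end Matrix

theorem Wblk_eq_submatrix (m₁ m₂ : ℕ) (ρ μ : ℝ) :
    Wblk m₁ m₂ ρ μ =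
      (fromBlocks ((1 - ρ) • 1 + (ρ - μ) • allOnes (Fin m₁) ℝ) 0 0
          ((1 - ρ) • 1 + (ρ - μ) • allOnes (Fin m₂) ℝ) + μ • allOnes _ ℝ).submatrix
        finSumFinEquiv.symm finSumFinEquiv.symm := by
  ext i j
  induction i using Fin.addCases <;> induction j using Fin.addCases <;>
    simp [Wblk, allOnes, one_apply, Fin.ext_iff] <;> first | (split_ifs <;> ring) | omega

theorem Wblk_posDef_general (m₁ m₂ : ℕ) (ρ μ : ℝ)
    (hρ : ρ ∈ Set.Ico (0 : ℝ) 1) (hμ : μ ∈ Set.Ico (0 : ℝ) 1)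
    (h₁ : 0 < 1 + ((m₁ : ℝ) - 1) * ρ - (m₁ : ℝ) * μ)
    (h₂ : 0 < 1 + ((m₂ : ℝ) - 1) * ρ - (m₂ : ℝ) * μ) :
    (Wblk m₁ m₂ ρ μ).PosDef := by
  have hblock (k : ℕ) (hk : 0 < 1 + ((k : ℝ) - 1) * ρ - k * μ) :
      ((1 - ρ) • 1 + (ρ - μ) • allOnes (Fin k) ℝ).PosDef :=
    posDef_smul_one_add_smul_allOnes (sub_pos.2 hρ.2) (by simp only [Fintype.card_fin]; linarith)
  rw [Wblk_eq_submatrix]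
  exact (((hblock m₁ h₁).fromBlocks_zero (hblock m₂ h₂)).add_posSemidef
    (posSemidef_allOnes.smul hμ.1)).submatrix finSumFinEquiv.symm.injective

/-- For `ρ, μ ∈ [0,1)` with `1+(m₁-1)ρ - m₁μ > 0` and `1+(m₂-1)ρ - m₂μ > 0`,
the matrix `W_{m₁,m₂}(ρ,μ)` is positive definite. -/
theorem Wblk_posDef (m₁ m₂ : ℕ) (hm₁ : 1 ≤ m₁) (hm₂ : 1 ≤ m₂) (ρ μ : ℝ)
    (hρ : ρ ∈ Set.Ico (0 : ℝ) 1) (hμ : μ ∈ Set.Ico (0 : ℝ) 1)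
    (h₁ : 0 < 1 + ((m₁ : ℝ) - 1) * ρ - (m₁ : ℝ) * μ)
    (h₂ : 0 < 1 + ((m₂ : ℝ) - 1) * ρ - (m₂ : ℝ) * μ) :
    (Wblk m₁ m₂ ρ μ).PosDef :=
  Wblk_posDef_general m₁ m₂ ρ μ hρ hμ h₁ h₂
end

section
/- Let m ≥ 2, let 1 ≤ m₁, m₂ < m, and let ρ, μ′ ∈ [0,1) be such that either ρ > μ′, or m₁ = m₂ = 1 and 1+(m−2)ρ − (m−1)μ′ > 0. Then for every μ ∈ ℝ, det Q_{m,m₁,m₂}(ρ,μ′,μ) = det W_{m₁,m−m₁}(ρ,μ′) · det W_{m₂,m−m₂}(ρ,μ′) · ( 1 − μ² · (𝟙ᵀ W_{m₁,m−m₁}(ρ,μ′)^{−1} 𝟙) · (𝟙ᵀ W_{m₂,m−m₂}(ρ,μ′)^{−1} 𝟙) ), where 𝟙 denotes the all-ones vector in ℝ^m. -/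
open Matrix

/-- The matrix `W_{m₁, m - m₁}(ρ, μ')`, realized as an `m × m` matrix: diagonal entries `1`,
off-diagonal entries `ρ` when the two indices lie in the same block (`< m₁` or `≥ m₁`) and `μ'`
otherwise. -/
def WblkM (m m₁ : ℕ) (ρ μ' : ℝ) : Matrix (Fin m) (Fin m) ℝ :=
  Matrix.of fun i j =>
    if i = j then 1 else if ((i : ℕ) < m₁ ↔ (j : ℕ) < m₁) then ρ else μ'

/-- The `2m × 2m` matrix `Q_{m,m₁,m₂}(ρ,μ′,μ)`: diagonal blocks `W_{m₁,m-m₁}(ρ,μ′)` and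
`W_{m₂,m-m₂}(ρ,μ′)`, off-diagonal blocks `μ` times the all-ones matrix. -/
def Qmat (m m₁ m₂ : ℕ) (ρ μ' μ : ℝ) : Matrix (Fin (2 * m)) (Fin (2 * m)) ℝ :=
  Matrix.of fun i j =>
    if (i : ℕ) < m ∧ (j : ℕ) < m then
      (if (i : ℕ) = (j : ℕ) then 1 else if ((i : ℕ) < m₁ ↔ (j : ℕ) < m₁) then ρ else μ')
    else if m ≤ (i : ℕ) ∧ m ≤ (j : ℕ) then
      (if (i : ℕ) = (j : ℕ) then 1
        else if ((i : ℕ) - m < m₂ ↔ (j : ℕ) - m < m₂) then ρ else μ')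
    else μ

/-! Viewing `Q` as a `2 × 2` block matrix with rank-one off-diagonal blocks `μ 𝟙𝟙ᵀ`, the Schur
complement of the first block is `W₂ - μ² (𝟙ᵀ W₁⁻¹ 𝟙) 𝟙𝟙ᵀ`, a rank-one perturbation of `W₂`, and
the matrix determinant lemma gives the formula. This needs `W₁` and `W₂` invertible, and they are
positive definite: writing `s₁, s₂` for the sums of `x` over the two blocks, the quadratic form of
`W_{k,m-k}(ρ,μ')` is `(1-ρ)|x|² + (ρ-μ')(s₁² + s₂²) + μ'(s₁ + s₂)²`. This is visibly positive when
`μ' < ρ`; when `k = 1` it is handled by Cauchy–Schwarz `s₂² ≤ (m-1) ∑_{i ≥ 1} xᵢ²`. -/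

namespace Matrix

variable {m n R : Type*} [Fintype m] [Fintype n] [DecidableEq m] [DecidableEq n] [CommRing R]

theorem det_add_vecMulVec {A : Matrix m m R} (hA : IsUnit A.det) (u v : m → R) :
    (A + vecMulVec u v).det = A.det * (1 + v ⬝ᵥ A⁻¹ *ᵥ u) := by
  rw [vecMulVec_eq Unit, det_add_replicateCol_mul_replicateRow hA,
    det_unique (1 + _ : Matrix Unit Unit R), add_apply, one_apply_eq, ← replicateRow_vecMul,
    replicateRow_mul_replicateCol_apply, dotProduct_mulVec]

theorem det_fromBlocks_vecMulVec {A : Matrix m m R} {B : Matrix n n R} (hA : IsUnit A.det)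
    (hB : IsUnit B.det) (u : m → R) (v : n → R) (w : n → R) (z : m → R) :
    (fromBlocks A (vecMulVec u v) (vecMulVec w z) B).det =
      A.det * B.det * (1 - (z ⬝ᵥ A⁻¹ *ᵥ u) * (v ⬝ᵥ B⁻¹ *ᵥ w)) := by
  have := A.invertibleOfIsUnitDet hA
  rw [det_fromBlocks₁₁, invOf_eq_nonsing_inv, vecMulVec_mul, vecMulVec_mul_vecMulVec,
    sub_eq_add_neg, ← vecMulVec_neg, ← neg_smul, det_add_vecMulVec hB, smul_dotProduct,
    dotProduct_mulVec z]
  ring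

end Matrix

def lowerBlock (m k : ℕ) : Fin m → ℝ := fun i => if (i : ℕ) < k then 1 else 0
def upperBlock (m k : ℕ) : Fin m → ℝ := fun i => if (i : ℕ) < k then 0 else 1

lemma WblkM_eq (m k : ℕ) (ρ μ' : ℝ) :
    WblkM m k ρ μ' = (1 - ρ) • (1 : Matrix (Fin m) (Fin m) ℝ) +
      (ρ - μ') • (vecMulVec (lowerBlock m k) (lowerBlock m k) +
        vecMulVec (upperBlock m k) (upperBlock m k)) + μ' • vecMulVec 1 1 := by
  ext i j
  by_cases hij : i = j
  · subst hij
    by_cases hi : (i : ℕ) < k <;> simp [WblkM, lowerBlock, upperBlock, vecMulVec, hi]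
  · by_cases hi : (i : ℕ) < k <;> by_cases hj : (j : ℕ) < k <;>
      simp [WblkM, lowerBlock, upperBlock, vecMulVec, hij, hi, hj]

lemma dotProduct_WblkM_mulVec (m k : ℕ) (ρ μ' : ℝ) (x : Fin m → ℝ) :
    x ⬝ᵥ (WblkM m k ρ μ' *ᵥ x) = (1 - ρ) * (x ⬝ᵥ x) +
      (ρ - μ') * ((lowerBlock m k ⬝ᵥ x) ^ 2 + (upperBlock m k ⬝ᵥ x) ^ 2) +
      μ' * (lowerBlock m k ⬝ᵥ x + upperBlock m k ⬝ᵥ x) ^ 2 := by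
  have hsum : lowerBlock m k + upperBlock m k = 1 := by
    ext i; by_cases hi : (i : ℕ) < k <;> simp [lowerBlock, upperBlock, hi]
  rw [WblkM_eq, ← hsum]
  simp only [add_mulVec, smul_mulVec, one_mulVec, vecMulVec_mulVec, dotProduct_add,
    dotProduct_smul, add_dotProduct, smul_eq_mul, op_smul_eq_mul]
  rw [dotProduct_comm x (lowerBlock m k), dotProduct_comm x (upperBlock m k)]
  ring

lemma WblkM_isHermitian (m k : ℕ) (ρ μ' : ℝ) : (WblkM m k ρ μ').IsHermitian :=
  isHermitian_iff_isSymm.2 <| IsSymm.ext fun i j => by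
    simp only [WblkM, of_apply, eq_comm, Iff.comm]

lemma posDef_WblkM_of_lt {m k : ℕ} {ρ μ' : ℝ} (hρ : ρ < 1) (hμ' : 0 ≤ μ') (h : μ' < ρ) :
    (WblkM m k ρ μ').PosDef := by
  refine .of_dotProduct_mulVec_pos (WblkM_isHermitian m k ρ μ') fun x hx => ?_
  have hxx : 0 < x ⬝ᵥ x := by simpa using dotProduct_self_star_pos_iff.2 hx
  rw [star_trivial, dotProduct_WblkM_mulVec]
  have := mul_pos (sub_pos.2 hρ) hxx
  have := mul_nonneg (sub_nonneg.2 h.le)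
    (add_nonneg (sq_nonneg (lowerBlock m k ⬝ᵥ x)) (sq_nonneg (upperBlock m k ⬝ᵥ x)))
  have := mul_nonneg hμ' (sq_nonneg (lowerBlock m k ⬝ᵥ x + upperBlock m k ⬝ᵥ x))
  linarith

lemma one_block_form_pos {ρ μ' n a s t : ℝ} (hρ : ρ < 1) (hμ₀ : 0 ≤ μ') (hμ₁ : μ' ≤ 1)
    (hn : 0 ≤ n) (ht : 0 ≤ t) (hst : s ^ 2 ≤ n * t) (hat : 0 < a ^ 2 + t)
    (h : 0 < 1 + (n - 1) * ρ - n * μ') :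
    0 < (1 - ρ) * (a ^ 2 + t) + (ρ - μ') * (a ^ 2 + s ^ 2) + μ' * (a + s) ^ 2 := by
  rcases eq_or_ne s 0 with rfl | hs
  · nlinarith [sq_nonneg a, mul_nonneg ht (sub_pos.2 hρ).le]
  · have hμsq : μ' ^ 2 ≤ μ' := by nlinarith
    -- complete the square in `a`; the middle term is nonnegative by `hst`
    have key : n * ((1 - ρ) * (a ^ 2 + t) + (ρ - μ') * (a ^ 2 + s ^ 2) + μ' * (a + s) ^ 2) =
        n * (a + μ' * s) ^ 2 + (1 - ρ) * (n * t - s ^ 2) +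
          (1 + (n - 1) * ρ - n * μ' ^ 2) * s ^ 2 := by ring
    refine pos_of_mul_pos_right ?_ hn
    rw [key]
    have := mul_nonneg hn (sq_nonneg (a + μ' * s))
    have := mul_nonneg (sub_pos.2 hρ).le (sub_nonneg.2 hst)
    have := mul_pos (show 0 < 1 + (n - 1) * ρ - n * μ' ^ 2 by nlinarith)
      (by positivity : 0 < s ^ 2)
    linarith

lemma posDef_WblkM_one {m : ℕ} {ρ μ' : ℝ} (hρ : ρ < 1) (hμ₀ : 0 ≤ μ') (hμ₁ : μ' ≤ 1)
    (h : 0 < 1 + ((m : ℝ) - 2) * ρ - ((m : ℝ) - 1) * μ') :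
    (WblkM m 1 ρ μ').PosDef := by
  refine .of_dotProduct_mulVec_pos (WblkM_isHermitian m 1 ρ μ') fun x hx => ?_
  cases m with
  | zero => exact absurd (Subsingleton.elim x 0) hx
  | succ n =>
    have hxx : 0 < x 0 ^ 2 + ∑ i : Fin n, x i.succ ^ 2 := by
      simpa [Fin.sum_univ_succ, dotProduct, sq] using dotProduct_self_star_pos_iff.2 hx
    have hlow : lowerBlock (n + 1) 1 ⬝ᵥ x = x 0 := by simp [dotProduct, lowerBlock]
    have hup : upperBlock (n + 1) 1 ⬝ᵥ x = ∑ i : Fin n, x i.succ := by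
      simp [dotProduct, Fin.sum_univ_succ, upperBlock]
    have hself : x ⬝ᵥ x = x 0 ^ 2 + ∑ i : Fin n, x i.succ ^ 2 := by
      simp [dotProduct, Fin.sum_univ_succ, sq]
    rw [star_trivial, dotProduct_WblkM_mulVec, hlow, hup, hself]
    refine one_block_form_pos hρ hμ₀ hμ₁ n.cast_nonneg (by positivity) ?_ hxx
      (by push_cast at h; linarith)
    simpa using sq_sum_le_card_mul_sum_sq (s := Finset.univ) (f := fun i : Fin n => x i.succ)

lemma posDef_WblkM {m k : ℕ} {ρ μ' : ℝ} (hρ : ρ ∈ Set.Ico (0 : ℝ) 1)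
    (hμ' : μ' ∈ Set.Ico (0 : ℝ) 1)
    (h : μ' < ρ ∨ (k = 1 ∧ 0 < 1 + ((m : ℝ) - 2) * ρ - ((m : ℝ) - 1) * μ')) :
    (WblkM m k ρ μ').PosDef := by
  rcases h with h | ⟨rfl, h⟩
  · exact posDef_WblkM_of_lt hρ.2 hμ'.1 h
  · exact posDef_WblkM_one hρ.2 hμ'.1 hμ'.2.le h

lemma Qmat_submatrix (m m₁ m₂ : ℕ) (ρ μ' μ : ℝ) :
    (Qmat m m₁ m₂ ρ μ' μ).submatrix (finSumFinEquiv.trans (finCongr (two_mul m).symm))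
        (finSumFinEquiv.trans (finCongr (two_mul m).symm)) =
      fromBlocks (WblkM m m₁ ρ μ') (vecMulVec (fun _ => μ) fun _ => 1)
        (vecMulVec (fun _ => μ) fun _ => 1) (WblkM m m₂ ρ μ') := by
  ext (i | i) (j | j) <;> simp [Qmat, WblkM, vecMulVec, Fin.ext_iff]

theorem Qmat_det_general (m m₁ m₂ : ℕ) (ρ μ' : ℝ)
    (hρ : ρ ∈ Set.Ico (0 : ℝ) 1) (hμ' : μ' ∈ Set.Ico (0 : ℝ) 1)
    (hcase : μ' < ρ ∨
      (m₁ = 1 ∧ m₂ = 1 ∧ 0 < 1 + ((m : ℝ) - 2) * ρ - ((m : ℝ) - 1) * μ'))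
    (μ : ℝ) :
    (Qmat m m₁ m₂ ρ μ' μ).det =
      (WblkM m m₁ ρ μ').det * (WblkM m m₂ ρ μ').det *
        (1 - μ ^ 2 *
          ((fun _ => (1 : ℝ)) ⬝ᵥ ((WblkM m m₁ ρ μ')⁻¹ *ᵥ fun _ => (1 : ℝ))) *
          ((fun _ => (1 : ℝ)) ⬝ᵥ ((WblkM m m₂ ρ μ')⁻¹ *ᵥ fun _ => (1 : ℝ)))) := by
  have hW₁ : IsUnit (WblkM m m₁ ρ μ').det :=
    (posDef_WblkM hρ hμ' (hcase.imp_right fun h => ⟨h.1, h.2.2⟩)).det_pos.ne'.isUnit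
  have hW₂ : IsUnit (WblkM m m₂ ρ μ').det :=
    (posDef_WblkM hρ hμ' (hcase.imp_right fun h => ⟨h.2.1, h.2.2⟩)).det_pos.ne'.isUnit
  have hconst : (fun _ : Fin m => μ) = μ • fun _ => 1 := by ext; simp
  rw [← det_submatrix_equiv_self (finSumFinEquiv.trans (finCongr (two_mul m).symm)),
    Qmat_submatrix, det_fromBlocks_vecMulVec hW₁ hW₂, hconst, mulVec_smul, mulVec_smul,
    dotProduct_smul, dotProduct_smul, smul_eq_mul, smul_eq_mul]
  ring

/-- Determinant factorization for `Q_{m,m₁,m₂}(ρ,μ′,μ)`: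
`det Q = det W_{m₁,m-m₁} ⬝ det W_{m₂,m-m₂} ⬝ (1 - μ² (𝟙ᵀ W_{m₁,m-m₁}⁻¹ 𝟙)(𝟙ᵀ W_{m₂,m-m₂}⁻¹ 𝟙))`. -/
theorem Qmat_det (m m₁ m₂ : ℕ) (hm : 2 ≤ m) (hm₁ : 1 ≤ m₁) (hm₁' : m₁ < m)
    (hm₂ : 1 ≤ m₂) (hm₂' : m₂ < m) (ρ μ' : ℝ)
    (hρ : ρ ∈ Set.Ico (0 : ℝ) 1) (hμ' : μ' ∈ Set.Ico (0 : ℝ) 1)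
    (hcase : μ' < ρ ∨
      (m₁ = 1 ∧ m₂ = 1 ∧ 0 < 1 + ((m : ℝ) - 2) * ρ - ((m : ℝ) - 1) * μ'))
    (μ : ℝ) :
    (Qmat m m₁ m₂ ρ μ' μ).det =
      (WblkM m m₁ ρ μ').det * (WblkM m m₂ ρ μ').det *
        (1 - μ ^ 2 *
          ((fun _ => (1 : ℝ)) ⬝ᵥ ((WblkM m m₁ ρ μ')⁻¹ *ᵥ fun _ => (1 : ℝ))) *
          ((fun _ => (1 : ℝ)) ⬝ᵥ ((WblkM m m₂ ρ μ')⁻¹ *ᵥ fun _ => (1 : ℝ)))) :=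
  Qmat_det_general m m₁ m₂ ρ μ' hρ hμ' hcase μ
end

section
/- Let m ≥ 2 and let ρ, μ′ ∈ [0,1) satisfy ρ > μ′. Then there exist constants δ > 0 and κ > 0, depending only on m, ρ, μ′, such that for every μ ∈ [0,δ] and every integer j with 1 ≤ j < m, the matrix Q_{m,j,j}(ρ,μ′,μ) is positive definite and every eigenvalue of Q_{m,j,j}(ρ,μ′,μ) is at most κ. -/
/-!
Label each index of `Q_{m,j,j}(ρ,μ′,μ)` by its group (one of the four diagonal blocks of sizes
`j, m - j, j, m - j`) and by its half. Then `Q = (1 - ρ) I + (ρ - μ′) G + μ′ H + μ (J - H)`, where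
`G` and `H` are the 0/1 matrices of "same group" and "same half" and `J` is the all-ones matrix.
`G` and `H` are Gram matrices, hence positive semidefinite, while `J - H` has entries in `{0, 1}`,
so its quadratic form is at least `-2m ‖v‖²`. Hence `vᵀQv ≥ (1 - ρ - 2mμ) ‖v‖²`, which is positive
for `μ ≤ (1 - ρ) / (4m)`. Since all entries of `Q` lie in `[0, 1]`, every eigenvalue is at most `2m`.
-/

open Matrix

section QuadraticForm

variable {ι : Type*} [Fintype ι]

lemma abs_dotProduct_mulVec_le (A : Matrix ι ι ℝ) (hA : ∀ i k, |A i k| ≤ 1) (v : ι → ℝ) :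
    |v ⬝ᵥ A *ᵥ v| ≤ Fintype.card ι * (v ⬝ᵥ v) := by
  calc |v ⬝ᵥ A *ᵥ v| = |∑ i, ∑ k, v i * A i k * v k| := by
        simp only [dotProduct, mulVec, Finset.mul_sum, mul_assoc]
    _ ≤ ∑ i, ∑ k, |v i| * |v k| := by
        refine (Finset.abs_sum_le_sum_abs _ _).trans (Finset.sum_le_sum fun i _ => ?_)
        refine (Finset.abs_sum_le_sum_abs _ _).trans (Finset.sum_le_sum fun k _ => ?_)
        rw [abs_mul, abs_mul]
        exact mul_le_mul_of_nonneg_right (mul_le_of_le_one_right (abs_nonneg _) (hA i k))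
          (abs_nonneg _)
    _ = (∑ i, |v i|) ^ 2 := by rw [sq, Finset.sum_mul_sum]
    _ ≤ Fintype.card ι * ∑ i, |v i| ^ 2 := sq_sum_le_card_mul_sum_sq
    _ = Fintype.card ι * (v ⬝ᵥ v) := by simp only [sq_abs, dotProduct, ← sq]

lemma le_card_of_mulVec_eq_smul (A : Matrix ι ι ℝ) (hA : ∀ i k, |A i k| ≤ 1)
    {κ : ℝ} {v : ι → ℝ} (hv : v ≠ 0) (hAv : A *ᵥ v = κ • v) : κ ≤ Fintype.card ι := by
  have hvv : 0 < v ⬝ᵥ v := by simpa using dotProduct_self_star_pos_iff.2 hv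
  have hquad := (le_abs_self _).trans (abs_dotProduct_mulVec_le A hA v)
  rw [hAv, dotProduct_smul, smul_eq_mul] at hquad
  exact le_of_mul_le_mul_right hquad hvv

end QuadraticForm

section SameClass

variable {ι α : Type*} [DecidableEq α]

def sameClass (f : ι → α) : Matrix ι ι ℝ := of fun i k => if f i = f k then 1 else 0

def classIndicator (f : ι → α) : Matrix α ι ℝ := of fun a i => if f i = a then 1 else 0

lemma sameClass_eq_conjTranspose_mul [Fintype α] (f : ι → α) :
    sameClass f = (classIndicator f)ᴴ * classIndicator f := by
  ext i k
  simp [sameClass, classIndicator, mul_apply, eq_comm]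

lemma dotProduct_mulVec_sameClass_nonneg [Fintype ι] [Fintype α] (f : ι → α) (v : ι → ℝ) :
    0 ≤ v ⬝ᵥ sameClass f *ᵥ v := by
  simpa [sameClass_eq_conjTranspose_mul] using
    (posSemidef_conjTranspose_mul_self _).dotProduct_mulVec_nonneg v

end SameClass

section NestedCorrMatrix

variable {ι α β : Type*} [DecidableEq ι] [DecidableEq α] [DecidableEq β]

def nestedCorrMatrix (g : ι → α) (b : ι → β) (ρ μ' μ : ℝ) : Matrix ι ι ℝ :=
  of fun i k => if i = k then 1 else if g i = g k then ρ else if b i = b k then μ' else μ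

variable {g : ι → α} {b : ι → β} {ρ μ' μ : ℝ}

lemma nestedCorrMatrix_isHermitian : (nestedCorrMatrix g b ρ μ' μ).IsHermitian := by
  ext i k
  simp [nestedCorrMatrix, eq_comm]

lemma abs_nestedCorrMatrix_apply_le (hρ : |ρ| ≤ 1) (hμ' : |μ'| ≤ 1) (hμ : |μ| ≤ 1) (i k : ι) :
    |nestedCorrMatrix g b ρ μ' μ i k| ≤ 1 := by
  simp only [nestedCorrMatrix, of_apply]
  split_ifs <;> simp [*]

lemma nestedCorrMatrix_eq (hgb : ∀ i k, g i = g k → b i = b k) :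
    nestedCorrMatrix g b ρ μ' μ = (1 - ρ) • 1 + (ρ - μ') • sameClass g + μ' • sameClass b +
      μ • of fun i k => if b i = b k then 0 else 1 := by
  ext i k
  simp only [nestedCorrMatrix, sameClass, of_apply, Matrix.add_apply, Matrix.smul_apply,
    one_apply, smul_eq_mul]
  by_cases hik : i = k
  · simp [hik]
  by_cases hg : g i = g k
  · simp [hik, hg, hgb i k hg]
  split_ifs <;> ring

variable [Fintype ι] [Fintype α] [Fintype β]

lemma nestedCorrMatrix_quadratic_lower (hgb : ∀ i k, g i = g k → b i = b k) (hμ'ρ : μ' ≤ ρ)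
    (hμ' : 0 ≤ μ') (hμ : 0 ≤ μ) (v : ι → ℝ) :
    (1 - ρ - Fintype.card ι * μ) * (v ⬝ᵥ v) ≤ v ⬝ᵥ nestedCorrMatrix g b ρ μ' μ *ᵥ v := by
  have hg := dotProduct_mulVec_sameClass_nonneg g v
  have hb := dotProduct_mulVec_sameClass_nonneg b v
  have hcross := neg_le_of_abs_le <| abs_dotProduct_mulVec_le
    (of fun i k => if b i = b k then (0 : ℝ) else 1)
    (fun i k => by simp only [of_apply]; split_ifs <;> simp) v
  rw [nestedCorrMatrix_eq hgb]
  simp only [add_mulVec, smul_mulVec, one_mulVec, dotProduct_add, dotProduct_smul, smul_eq_mul]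
  nlinarith [mul_nonneg (sub_nonneg.2 hμ'ρ) hg, mul_nonneg hμ' hb,
    mul_le_mul_of_nonneg_left hcross hμ]

lemma nestedCorrMatrix_posDef (hgb : ∀ i k, g i = g k → b i = b k) (hμ'ρ : μ' ≤ ρ)
    (hμ' : 0 ≤ μ') (hμ : 0 ≤ μ) (hsmall : Fintype.card ι * μ < 1 - ρ) :
    (nestedCorrMatrix g b ρ μ' μ).PosDef := by
  refine posDef_iff_dotProduct_mulVec.2 ⟨nestedCorrMatrix_isHermitian, fun v hv => ?_⟩
  have hvv : 0 < v ⬝ᵥ v := by simpa using dotProduct_self_star_pos_iff.2 hv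
  simpa using (mul_pos (by linarith) hvv).trans_le
    (nestedCorrMatrix_quadratic_lower hgb hμ'ρ hμ' hμ v)

end NestedCorrMatrix

def qGroup (m j : ℕ) (i : Fin (2 * m)) : Bool × Bool :=
  if (i : ℕ) < m then (true, decide ((i : ℕ) < j)) else (false, decide ((i : ℕ) - m < j))

lemma Qmat_eq_nestedCorrMatrix (m j : ℕ) (ρ μ' μ : ℝ) :
    Qmat m j j ρ μ' μ = nestedCorrMatrix (qGroup m j) (Prod.fst ∘ qGroup m j) ρ μ' μ := by
  ext i k
  simp only [Qmat, nestedCorrMatrix, qGroup, Function.comp_apply, of_apply, Fin.ext_iff]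
  split_ifs <;> simp_all <;> omega

/-- For `m ≥ 2` and `ρ, μ′ ∈ [0,1)` with `ρ > μ′`, there are `δ > 0` and
`κ > 0`, depending only on `m, ρ, μ′`, such that for all `μ ∈ [0,δ]` and all `1 ≤ j < m` the
matrix `Q_{m,j,j}(ρ,μ′,μ)` is positive definite with all eigenvalues at most `κ`. -/
theorem Qmat_posDef_eigenvalue_bound (m : ℕ) (hm : 2 ≤ m) (ρ μ' : ℝ)
    (hρ : ρ ∈ Set.Ico (0 : ℝ) 1) (hμ' : μ' ∈ Set.Ico (0 : ℝ) 1) (h : μ' < ρ) :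
    ∃ δ > (0 : ℝ), ∃ κ > (0 : ℝ), ∀ μ ∈ Set.Icc (0 : ℝ) δ, ∀ j : ℕ, 1 ≤ j → j < m →
      (Qmat m j j ρ μ' μ).PosDef ∧
      ∀ (κ' : ℝ) (v : Fin (2 * m) → ℝ), v ≠ 0 →
        (Qmat m j j ρ μ' μ).mulVec v = κ' • v → κ' ≤ κ := by
  obtain ⟨hρ0, hρ1⟩ := hρ
  obtain ⟨hμ'0, hμ'1⟩ := hμ'
  have hm1 : (1 : ℝ) ≤ m := by exact_mod_cast (by omega : 1 ≤ m)
  refine ⟨(1 - ρ) / (4 * m), div_pos (by linarith) (by linarith), 2 * m, by linarith, ?_⟩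
  rintro μ ⟨hμ0, hμδ⟩ j - -
  have hμm : μ * (4 * m) ≤ 1 - ρ := (le_div_iff₀ (by linarith)).1 hμδ
  have hsmall : Fintype.card (Fin (2 * m)) * μ < 1 - ρ := by
    push_cast [Fintype.card_fin]
    nlinarith
  have hμ1 : |μ| ≤ 1 := by
    rw [abs_of_nonneg hμ0]
    nlinarith
  rw [Qmat_eq_nestedCorrMatrix]
  refine ⟨nestedCorrMatrix_posDef (fun i k hik => congrArg Prod.fst hik) h.le hμ'0 hμ0 hsmall,
    fun κ' v hv hev => ?_⟩
  simpa using le_card_of_mulVec_eq_smul _ (abs_nestedCorrMatrix_apply_le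
    (abs_le.2 ⟨by linarith, hρ1.le⟩) (abs_le.2 ⟨by linarith, hμ'1.le⟩) hμ1) hv hev
end

section
/- Let k ≥ 1 be an integer and let ρ₁, ρ₂ ∈ [0,1) satisfy 1+(2k+1)ρ₂ > (2k+2)ρ₁, so that the (2k+3)×(2k+3) matrix W_{2k+2,1}(ρ₂,ρ₁) is symmetric positive definite. Let Y be a random vector with law N(0, W_{2k+2,1}(ρ₂,ρ₁)), and set φ_k := (2k+3 + (2k+1)ρ₂ − (4k+4)ρ₁) / ( 2(1 + (2k+1)ρ₂ − (2k+2)ρ₁²) ). Then there exists a constant C ≥ 0, depending only on k, ρ₁, ρ₂, such that for every u > 0: P{Y ≥ u·1_{2k+3}} ≤ C u^{−(2k+3)} exp(−φ_k u²). -/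
open Matrix MeasureTheory

/-- The centered multivariate Gaussian measure `N(0, S)` on `ℝⁿ` (for `S` symmetric positive
definite), defined by its density `(2π)^(-n/2) (det S)^(-1/2) exp(-⟨x, S⁻¹ x⟩/2)` with respect to
Lebesgue measure. -/
noncomputable def gaussianOf (n : ℕ) (S : Matrix (Fin n) (Fin n) ℝ) :
    Measure (Fin n → ℝ) :=
  volume.withDensity fun x => ENNReal.ofReal
    ((2 * Real.pi) ^ (-(n : ℝ) / 2) * S.det ^ (-(1 : ℝ) / 2) *
      Real.exp (-(x ⬝ᵥ (S⁻¹ *ᵥ x)) / 2))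

/-!
Let `v` solve `S v = 1` and let `c > 0` bound every `v i` from below. Writing a point of the
orthant `{x ≥ u·1}` as `x = u·1 + y` with `y ≥ 0`, symmetry of `S⁻¹` gives
`xᵀ S⁻¹ x = u² ∑ v + 2u vᵀy + yᵀ S⁻¹ y ≥ u² ∑ v + 2cu ∑ yᵢ`.
So on the orthant the Gaussian density is at most `exp(-u² ∑ v / 2)` times a product of
exponential densities of rate `cu` started at `u`, each of total mass `(cu)⁻¹`; this gives the
factor `u^(-n)`.

For `S = W_{m,1}(ρ₂,ρ₁)` the solution is `v = (a,…,a,b)` with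
`a = (1-ρ₁)/D`, `b = (1+(m-1)ρ₂-mρ₁)/D`, `D = 1+(m-1)ρ₂-mρ₁²`; both are positive
under the hypotheses, and `(∑ v)/2 = (m a + b)/2` is the exponent `φ_k` for `m = 2k+2`.
-/

open Set

noncomputable def truncExp (lam u : ℝ) : ℝ → ℝ :=
  (Ici u).indicator fun r => Real.exp (-lam * (r - u))

theorem truncExp_of_le {lam u r : ℝ} (hr : u ≤ r) :
    truncExp lam u r = Real.exp (-lam * (r - u)) :=
  indicator_of_mem hr _

theorem truncExp_nonneg (lam u r : ℝ) : 0 ≤ truncExp lam u r :=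
  indicator_nonneg (fun _ _ => (Real.exp_pos _).le) r

theorem integrable_truncExp {lam : ℝ} (hlam : 0 < lam) (u : ℝ) :
    Integrable (truncExp lam u) := by
  rw [truncExp, integrable_indicator_iff measurableSet_Ici, integrableOn_Ici_iff_integrableOn_Ioi]
  simp_rw [mul_sub, Real.exp_sub]
  exact (integrableOn_exp_mul_Ioi (by linarith) u).div_const _

theorem integral_truncExp {lam : ℝ} (hlam : 0 < lam) (u : ℝ) :
    ∫ r, truncExp lam u r = lam⁻¹ := by
  simp_rw [truncExp, mul_sub, Real.exp_sub]
  rw [integral_indicator measurableSet_Ici, integral_Ici_eq_integral_Ioi, integral_div,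
    integral_exp_mul_Ioi (by linarith), neg_div_neg_eq, div_div_cancel_left' (Real.exp_pos _).ne']

section Orthant

variable {n : ℕ}

theorem integrable_prod_truncExp {lam : ℝ} (hlam : 0 < lam) (u : ℝ) :
    Integrable fun x : Fin n → ℝ => ∏ i, truncExp lam u (x i) := by
  rw [volume_pi]
  exact Integrable.fintype_prod fun _ => integrable_truncExp hlam u

theorem integral_prod_truncExp {lam : ℝ} (hlam : 0 < lam) (u : ℝ) :
    ∫ x : Fin n → ℝ, ∏ i, truncExp lam u (x i) = lam⁻¹ ^ n := by
  rw [volume_pi, integral_fintype_prod_eq_pow, integral_truncExp hlam, Fintype.card_fin]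

theorem measurableSet_orthant (u : ℝ) : MeasurableSet {x : Fin n → ℝ | ∀ i, u ≤ x i} := by
  simp only [ofPred_forall]
  exact MeasurableSet.iInter fun i => measurableSet_le measurable_const (measurable_pi_apply i)

variable {S : Matrix (Fin n) (Fin n) ℝ} {v : Fin n → ℝ}

theorem Matrix.PosDef.le_dotProduct_inv_mulVec_of_forall_le (hS : S.PosDef) (hv : S *ᵥ v = 1)
    {c u : ℝ} (hu : 0 ≤ u) (hcv : ∀ i, c ≤ v i) {x : Fin n → ℝ}
    (hx : ∀ i, u ≤ x i) :
    u ^ 2 * ∑ i, v i + 2 * u * c * ∑ i, (x i - u) ≤ x ⬝ᵥ S⁻¹ *ᵥ x := by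
  set y : Fin n → ℝ := fun i => x i - u
  have hxy : x = u • 1 + y := by funext i; simp [y]
  have hinv : S⁻¹ *ᵥ 1 = v := by
    rw [← hv, mulVec_mulVec, nonsing_inv_mul S hS.det_pos.ne'.isUnit, one_mulVec]
  have hsymm : y ⬝ᵥ v = 1 ⬝ᵥ S⁻¹ *ᵥ y := by
    rw [dotProduct_mulVec, ← mulVec_transpose, ← conjTranspose_eq_transpose_of_trivial,
      hS.inv.isHermitian.eq, hinv, dotProduct_comm]
  have hexpand : x ⬝ᵥ S⁻¹ *ᵥ x =
      u ^ 2 * ∑ i, v i + 2 * u * (v ⬝ᵥ y) + y ⬝ᵥ S⁻¹ *ᵥ y := by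
    rw [hxy, mulVec_add, mulVec_smul, hinv]
    simp only [dotProduct_add, add_dotProduct, smul_dotProduct, dotProduct_smul, smul_eq_mul,
      ← hsymm, one_dotProduct, dotProduct_comm y v]
    ring
  have hcross : c * ∑ i, y i ≤ v ⬝ᵥ y := by
    rw [Finset.mul_sum]
    exact Finset.sum_le_sum fun i _ => mul_le_mul_of_nonneg_right (hcv i) (sub_nonneg.2 (hx i))
  have hpsd : 0 ≤ y ⬝ᵥ S⁻¹ *ᵥ y := by
    simpa using hS.inv.posSemidef.dotProduct_mulVec_nonneg y
  rw [hexpand]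
  nlinarith

theorem gaussianOf_orthant_le_ofReal (hS : S.PosDef) (hv : S *ᵥ v = 1) {c u : ℝ} (hc : 0 < c)
    (hcv : ∀ i, c ≤ v i) (hu : 0 < u) :
    gaussianOf n S {x | ∀ i, u ≤ x i} ≤ ENNReal.ofReal
      ((2 * Real.pi) ^ (-(n : ℝ) / 2) * S.det ^ (-(1 : ℝ) / 2) *
        Real.exp (-((∑ i, v i) / 2) * u ^ 2) * (c * u)⁻¹ ^ n) := by
  rw [gaussianOf, withDensity_apply _ (measurableSet_orthant u)]
  set c₀ := (2 * Real.pi) ^ (-(n : ℝ) / 2) * S.det ^ (-(1 : ℝ) / 2)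
  set K := c₀ * Real.exp (-((∑ i, v i) / 2) * u ^ 2)
  have hc₀ : 0 ≤ c₀ := by have := hS.det_pos; positivity
  have hK : 0 ≤ K := by positivity
  have hdensity : ∀ x ∈ {x : Fin n → ℝ | ∀ i, u ≤ x i},
      c₀ * Real.exp (-(x ⬝ᵥ (S⁻¹ *ᵥ x)) / 2) ≤
        K * ∏ i, truncExp (c * u) u (x i) := by
    intro x hx
    simp only [K, truncExp_of_le (hx _), mul_assoc, ← Real.exp_sum, ← Real.exp_add]
    refine mul_le_mul_of_nonneg_left (Real.exp_le_exp.2 ?_) hc₀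
    have := hS.le_dotProduct_inv_mulVec_of_forall_le hv hu.le hcv hx
    rw [← Finset.mul_sum]
    linarith
  have hint : Integrable fun x : Fin n → ℝ => K * ∏ i, truncExp (c * u) u (x i) :=
    (integrable_prod_truncExp (mul_pos hc hu) u).const_mul K
  have hnonneg : ∀ x : Fin n → ℝ, 0 ≤ K * ∏ i, truncExp (c * u) u (x i) :=
    fun x => mul_nonneg hK (Finset.prod_nonneg fun i _ => truncExp_nonneg _ _ _)
  calc _ ≤ ∫⁻ x in {x : Fin n → ℝ | ∀ i, u ≤ x i},
          ENNReal.ofReal (K * ∏ i, truncExp (c * u) u (x i)) :=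
        setLIntegral_mono' (measurableSet_orthant u) fun x hx =>
          ENNReal.ofReal_le_ofReal (hdensity x hx)
    _ ≤ ∫⁻ x : Fin n → ℝ, ENNReal.ofReal (K * ∏ i, truncExp (c * u) u (x i)) :=
        setLIntegral_le_lintegral _ _
    _ = ENNReal.ofReal (K * (c * u)⁻¹ ^ n) := by
        rw [← ofReal_integral_eq_lintegral_ofReal hint (Filter.Eventually.of_forall hnonneg),
          integral_const_mul, integral_prod_truncExp (mul_pos hc hu)]

theorem exists_gaussianOf_orthant_toReal_le (hS : S.PosDef) (hv : S *ᵥ v = 1) {c : ℝ}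
    (hc : 0 < c) (hcv : ∀ i, c ≤ v i) :
    ∃ C : ℝ, 0 ≤ C ∧ ∀ u : ℝ, 0 < u →
      (gaussianOf n S {x | ∀ i, u ≤ x i}).toReal ≤
        C * u ^ (-(n : ℝ)) * Real.exp (-((∑ i, v i) / 2) * u ^ 2) := by
  have := hS.det_pos
  refine ⟨(2 * Real.pi) ^ (-(n : ℝ) / 2) * S.det ^ (-(1 : ℝ) / 2) * c⁻¹ ^ n, by positivity,
    fun u hu => ?_⟩
  refine (ENNReal.toReal_le_of_le_ofReal (by positivity)
    (gaussianOf_orthant_le_ofReal hS hv hc hcv hu)).trans_eq ?_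
  rw [Real.rpow_neg hu.le, Real.rpow_natCast, mul_inv, mul_pow, inv_pow]
  ring

end Orthant

theorem Wblk_isHermitian (m₁ m₂ : ℕ) (ρ μ : ℝ) : (Wblk m₁ m₂ ρ μ).IsHermitian := by
  ext i j
  simp only [conjTranspose_apply, Wblk, of_apply, star_trivial, eq_comm (a := j), Iff.comm]

section SingleLastBlock

variable {m : ℕ} {ρ μ : ℝ}

@[simp] theorem Wblk_castSucc_castSucc (i j : Fin m) :
    Wblk m 1 ρ μ i.castSucc j.castSucc = if i = j then 1 else ρ := by
  simp [Wblk]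

@[simp] theorem Wblk_castSucc_last (i : Fin m) : Wblk m 1 ρ μ i.castSucc (Fin.last m) = μ := by
  simp [Wblk, Fin.castSucc_ne_last]

@[simp] theorem Wblk_last_castSucc (j : Fin m) : Wblk m 1 ρ μ (Fin.last m) j.castSucc = μ := by
  simp [Wblk, (Fin.castSucc_ne_last j).symm]

@[simp] theorem Wblk_last_last : Wblk m 1 ρ μ (Fin.last m) (Fin.last m) = 1 := by
  simp [Wblk]

theorem Wblk_mulVec_castSucc (x : Fin (m + 1) → ℝ) (i : Fin m) :
    (Wblk m 1 ρ μ *ᵥ x) i.castSucc =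
      (1 - ρ) * x i.castSucc + ρ * ∑ j : Fin m, x j.castSucc + μ * x (Fin.last m) := by
  have hsplit : ∀ j : Fin m, (if i = j then 1 else ρ) * x j.castSucc =
      ρ * x j.castSucc + if i = j then (1 - ρ) * x j.castSucc else 0 := by
    intro j; split_ifs <;> ring
  simp only [mulVec, dotProduct, Fin.sum_univ_castSucc, Wblk_castSucc_castSucc,
    Wblk_castSucc_last, hsplit, Finset.sum_add_distrib, Finset.sum_ite_eq, Finset.mem_univ,
    if_true, ← Finset.mul_sum]
  ring

theorem Wblk_mulVec_last (x : Fin (m + 1) → ℝ) :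
    (Wblk m 1 ρ μ *ᵥ x) (Fin.last m) = μ * ∑ j : Fin m, x j.castSucc + x (Fin.last m) := by
  simp [mulVec, dotProduct, Fin.sum_univ_castSucc, Finset.mul_sum]

theorem Wblk_mulVec_snoc (a b : ℝ) :
    Wblk m 1 ρ μ *ᵥ Fin.snoc (fun _ : Fin m => a) b =
      Fin.snoc (fun _ : Fin m => (1 + (m - 1) * ρ) * a + μ * b) (m * μ * a + b) := by
  funext i
  induction i using Fin.lastCases with
  | last => simp [Wblk_mulVec_last]; ring
  | cast i => simp [Wblk_mulVec_castSucc]; ring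

theorem Wblk_mulVec_snoc_eq_one (hD : 1 + (m - 1) * ρ - m * μ ^ 2 ≠ 0) :
    Wblk m 1 ρ μ *ᵥ Fin.snoc (fun _ : Fin m => (1 - μ) / (1 + (m - 1) * ρ - m * μ ^ 2))
      ((1 + (m - 1) * ρ - m * μ) / (1 + (m - 1) * ρ - m * μ ^ 2)) = 1 := by
  rw [Wblk_mulVec_snoc]
  funext i
  induction i using Fin.lastCases with
  | last => simp only [Fin.snoc_last, Pi.one_apply]; field_simp; ring
  | cast i => simp only [Fin.snoc_castSucc, Pi.one_apply]; field_simp; ring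

theorem dotProduct_Wblk_mulVec (x : Fin (m + 1) → ℝ) :
    x ⬝ᵥ Wblk m 1 ρ μ *ᵥ x =
      (1 - ρ) * ∑ j : Fin m, x j.castSucc ^ 2 + ρ * (∑ j : Fin m, x j.castSucc) ^ 2
        + 2 * μ * (∑ j : Fin m, x j.castSucc) * x (Fin.last m) + x (Fin.last m) ^ 2 := by
  simp only [dotProduct, Fin.sum_univ_castSucc, Wblk_mulVec_castSucc, Wblk_mulVec_last, mul_add,
    Finset.sum_add_distrib, ← Finset.sum_mul, mul_left_comm _ (1 - ρ), ← Finset.mul_sum,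
    ← sq]
  ring

theorem Wblk_posDef_s15 (hm : 0 < m) (hρ : ρ < 1) (hμ : m * μ ^ 2 < 1 + (m - 1) * ρ) :
    (Wblk m 1 ρ μ).PosDef := by
  refine PosDef.of_dotProduct_mulVec_pos (Wblk_isHermitian m 1 ρ μ) fun x hx => ?_
  rw [star_trivial, dotProduct_Wblk_mulVec]
  set Q := ∑ j : Fin m, x j.castSucc ^ 2
  set s := ∑ j : Fin m, x j.castSucc
  set t := x (Fin.last m)
  have hM : (0 : ℝ) < m := Nat.cast_pos.2 hm
  have hCS : s ^ 2 ≤ m * Q := by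
    simpa using sq_sum_le_card_mul_sum_sq (s := Finset.univ) (f := fun j : Fin m => x j.castSucc)
  have hx2 : 0 < Q + t ^ 2 := by
    simpa [dotProduct, Fin.sum_univ_castSucc, sq, Q, t] using dotProduct_star_self_pos_iff.2 hx
  have hkey : m * ((1 - ρ) * Q + ρ * s ^ 2 + 2 * μ * s * t + t ^ 2) =
      (1 - ρ) * (m * Q - s ^ 2) + (1 + (m - 1) * ρ - m * μ ^ 2) * s ^ 2
        + m * (t + μ * s) ^ 2 := by
    ring
  have hD : 0 < 1 + (m - 1) * ρ - m * μ ^ 2 := sub_pos.2 hμ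
  have hA : 0 ≤ (1 - ρ) * (m * Q - s ^ 2) := mul_nonneg (by linarith) (by linarith)
  have hB : 0 ≤ (1 + (m - 1) * ρ - m * μ ^ 2) * s ^ 2 := by positivity
  have hC : 0 ≤ m * (t + μ * s) ^ 2 := by positivity
  -- all three summands of `hkey` are nonnegative, so if the form were `≤ 0` they would vanish
  by_contra! hle
  have hsum := hkey ▸ mul_nonpos_of_nonneg_of_nonpos hM.le hle
  have hs : s = 0 := (sq_nonpos_iff s).1 (nonpos_of_mul_nonpos_right (by linarith) hD)
  have ht : t = 0 := by
    have hC0 : m * (t + μ * s) ^ 2 ≤ 0 := by linarith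
    rw [hs, mul_zero, add_zero] at hC0
    exact (sq_nonpos_iff t).1 (nonpos_of_mul_nonpos_right hC0 hM)
  have hA0 : (1 - ρ) * (m * Q - s ^ 2) ≤ 0 := by linarith
  have hQ := nonpos_of_mul_nonpos_right hA0 (by linarith)
  rw [hs] at hQ
  rw [ht] at hx2
  nlinarith

theorem exists_gaussianOf_Wblk_orthant_toReal_le (hm : 0 < m) (hρ : ρ < 1)
    (hμ : μ ∈ Ico (0 : ℝ) 1) (h : m * μ < 1 + (m - 1) * ρ) :
    ∃ C : ℝ, 0 ≤ C ∧ ∀ u : ℝ, 0 < u →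
      (gaussianOf (m + 1) (Wblk m 1 ρ μ) {x | ∀ i, u ≤ x i}).toReal ≤
        C * u ^ (-((m : ℝ) + 1)) * Real.exp (-((1 + m + (m - 1) * ρ - 2 * m * μ) /
          (2 * (1 + (m - 1) * ρ - m * μ ^ 2))) * u ^ 2) := by
  have hM : (0 : ℝ) < m := Nat.cast_pos.2 hm
  have hD : 0 < 1 + (m - 1) * ρ - m * μ ^ 2 := by
    nlinarith [mul_nonneg hM.le (mul_nonneg hμ.1 (sub_nonneg.2 hμ.2.le))]
  set D := 1 + (m - 1) * ρ - m * μ ^ 2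
  set a := (1 - μ) / D
  set b := (1 + (m - 1) * ρ - m * μ) / D
  have hmin : ∀ i, min a b ≤ (Fin.snoc (fun _ : Fin m => a) b : _ → ℝ) i := by
    intro i
    induction i using Fin.lastCases <;> simp
  obtain ⟨C, hC, hbound⟩ := exists_gaussianOf_orthant_toReal_le
    (Wblk_posDef_s15 hm hρ (by linarith)) (Wblk_mulVec_snoc_eq_one hD.ne')
    (lt_min (div_pos (by linarith [hμ.2]) hD) (div_pos (by linarith) hD)) hmin
  refine ⟨C, hC, fun u hu => (hbound u hu).trans_eq ?_⟩
  have hsum : ∑ i, (Fin.snoc (fun _ : Fin m => a) b : _ → ℝ) i = m * a + b := by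
    simp [Fin.sum_univ_castSucc]
  rw [hsum]
  congr 4
  · push_cast; ring
  · simp only [a, b]; field_simp; ring

end SingleLastBlock

theorem gaussian_orthant_tail_upper_estimate_general (k : ℕ) (ρ₁ ρ₂ : ℝ)
    (hρ₁ : ρ₁ ∈ Set.Ico (0 : ℝ) 1) (hρ₂ : ρ₂ ∈ Set.Ico (0 : ℝ) 1)
    (h : (2 * (k : ℝ) + 2) * ρ₁ < 1 + (2 * (k : ℝ) + 1) * ρ₂) :
    ∃ C : ℝ, 0 ≤ C ∧ ∀ u : ℝ, 0 < u →
      (gaussianOf (2 * k + 2 + 1) (Wblk (2 * k + 2) 1 ρ₂ ρ₁) {x | ∀ i, u ≤ x i}).toReal ≤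
        C * u ^ (-(2 * (k : ℝ) + 3)) *
          Real.exp (-((2 * (k : ℝ) + 3 + (2 * (k : ℝ) + 1) * ρ₂ - (4 * (k : ℝ) + 4) * ρ₁) /
            (2 * (1 + (2 * (k : ℝ) + 1) * ρ₂ - (2 * (k : ℝ) + 2) * ρ₁ ^ 2)) * u ^ 2)) := by
  obtain ⟨C, hC, hbound⟩ := exists_gaussianOf_Wblk_orthant_toReal_le (m := 2 * k + 2)
    (by omega) hρ₂.2 hρ₁ (by push_cast; linarith)
  refine ⟨C, hC, fun u hu => (hbound u hu).trans_eq ?_⟩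
  congr 4 <;> push_cast <;> ring

/-- For `Y ~ N(0, W_{2k+2,1}(ρ₂,ρ₁))` with `ρ₁, ρ₂ ∈ [0,1)` and
`1+(2k+1)ρ₂ > (2k+2)ρ₁`, setting
`φ_k = (2k+3+(2k+1)ρ₂-(4k+4)ρ₁)/(2(1+(2k+1)ρ₂-(2k+2)ρ₁²))`, there is a constant `C ≥ 0`
(depending only on `k, ρ₁, ρ₂`) with `P{Y ≥ u·1} ≤ C u^(-(2k+3)) exp(-φ_k u²)` for all
`u > 0`. -/
theorem gaussian_orthant_tail_upper_estimate (k : ℕ) (hk : 1 ≤ k) (ρ₁ ρ₂ : ℝ)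
    (hρ₁ : ρ₁ ∈ Set.Ico (0 : ℝ) 1) (hρ₂ : ρ₂ ∈ Set.Ico (0 : ℝ) 1)
    (h : (2 * (k : ℝ) + 2) * ρ₁ < 1 + (2 * (k : ℝ) + 1) * ρ₂) :
    ∃ C : ℝ, 0 ≤ C ∧ ∀ u : ℝ, 0 < u →
      (gaussianOf (2 * k + 2 + 1) (Wblk (2 * k + 2) 1 ρ₂ ρ₁) {x | ∀ i, u ≤ x i}).toReal ≤
        C * u ^ (-(2 * (k : ℝ) + 3)) *
          Real.exp (-((2 * (k : ℝ) + 3 + (2 * (k : ℝ) + 1) * ρ₂ - (4 * (k : ℝ) + 4) * ρ₁) /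
            (2 * (1 + (2 * (k : ℝ) + 1) * ρ₂ - (2 * (k : ℝ) + 2) * ρ₁ ^ 2)) * u ^ 2)) :=
  gaussian_orthant_tail_upper_estimate_general k ρ₁ ρ₂ hρ₁ hρ₂ h
end
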